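/- arXiv:1303.2485 — 2 statements merged into one kernel-verified Lean document; each statement's English description precedes it below -/
import Mathlib

section
/- Let T be a bounded operator on a complex Hilbert space H, let n ≥ 1, and let λ₀, λ₁, …, λ_n be complex scalars with λ₀ ≠ 0. The (n+1)-Kronecker representation with f_{α₀} = ∑_{k=0}^{n} λ_k T^k and f_{α_k} = T^k for k = 1, …, n (on H₁ = H₂ = H) is indecomposable — i.e., the only pairs (A,B) of idempotent bounded operators with B f_{α_k} = f_{α_k} A for all k = 0, …, n are (0,0) and (I,I) — if and only if T is strongly irreducible. -/
/-- A bounded operator `T` on a complex Hilbert space is *strongly irreducible* if there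
is no pair of non-zero closed `T`-invariant subspaces `M`, `N` with `M ∩ N = 0` and
`M + N = H`. -/
def StronglyIrreducible {H : Type*} [NormedAddCommGroup H] [InnerProductSpace ℂ H]
    (T : H →L[ℂ] H) : Prop :=
  ¬ ∃ M N : Submodule ℂ H,
      IsClosed (M : Set H) ∧ IsClosed (N : Set H) ∧
      (∀ x ∈ M, T x ∈ M) ∧ (∀ x ∈ N, T x ∈ N) ∧
      M ⊓ N = ⊥ ∧ M ⊔ N = ⊤ ∧ M ≠ ⊥ ∧ N ≠ ⊥

/-
If idempotents `A`, `B` intertwine every `T ^ k` with `k ≥ 1` and also `∑ λ_k T ^ k`, the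
`k ≥ 1` terms cancel and leave `λ₀ B = λ₀ A`, so `B = A` commutes with `T`. Hence the
representation is indecomposable iff every idempotent commuting with `T` is `0` or `1`. In a
Hilbert space, idempotents commuting with `T` are exactly the projections onto one closed
`T`-invariant subspace along a complementary one (their range and kernel), by the closed graph
theorem, which gives strong irreducibility.
-/

open Finset

section Kronecker

variable {K R : Type*} [Field K] [Ring R] [Algebra K R]

theorem eq_of_mul_pow_eq_pow_mul {A B T : R} {n : ℕ} {c : ℕ → K} (hc : c 0 ≠ 0)
    (hpow : ∀ k, 1 ≤ k → k ≤ n → B * T ^ k = T ^ k * A)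
    (hsum : B * ∑ k ∈ range (n + 1), c k • T ^ k =
      (∑ k ∈ range (n + 1), c k • T ^ k) * A) :
    B = A := by
  rw [mul_sum, sum_mul, sum_range_succ', sum_range_succ'] at hsum
  have hhigh : ∑ k ∈ range n, B * c (k + 1) • T ^ (k + 1) =
      ∑ k ∈ range n, c (k + 1) • T ^ (k + 1) * A :=
    sum_congr rfl fun k hk => by
      rw [mul_smul_comm, smul_mul_assoc, hpow (k + 1) k.succ_pos (mem_range.1 hk)]
  rw [hhigh, add_left_cancel_iff, pow_zero, mul_smul_comm, smul_mul_assoc, mul_one,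
    one_mul] at hsum
  exact smul_right_injective R hc hsum

theorem forall_intertwining_idempotents_trivial_iff (T : R) {n : ℕ} (hn : 1 ≤ n) (c : ℕ → K)
    (hc : c 0 ≠ 0) :
    (∀ A B : R, A * A = A → B * B = B →
      (∀ k, 1 ≤ k → k ≤ n → B * T ^ k = T ^ k * A) →
      B * ∑ k ∈ range (n + 1), c k • T ^ k = (∑ k ∈ range (n + 1), c k • T ^ k) * A →
      (A = 0 ∧ B = 0) ∨ (A = 1 ∧ B = 1)) ↔
    ∀ P : R, IsIdempotentElem P → Commute P T → P = 0 ∨ P = 1 := by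
  constructor
  · intro h P hP hPT
    have hPsum : Commute P (∑ k ∈ range (n + 1), c k • T ^ k) :=
      Commute.sum_right _ _ _ fun k _ => (hPT.pow_right k).smul_right (c k)
    simpa using h P P hP hP (fun k _ _ => (hPT.pow_right k).eq) hPsum.eq
  · intro h A B _ hB hpow hsum
    obtain rfl : B = A := eq_of_mul_pow_eq_pow_mul hc hpow hsum
    have hBT : Commute B T := by
      have hT := hpow 1 le_rfl hn
      rwa [pow_one] at hT
    simpa using h B hB hBT

end Kronecker

theorem ContinuousLinearMap.IsIdempotentElem.ker_eq_bot_iff {R M : Type*} [Ring R]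
    [TopologicalSpace M] [AddCommGroup M] [Module R M] {P : M →L[R] M}
    (hP : IsIdempotentElem P) : P.ker = ⊥ ↔ P = 1 := by
  rw [LinearMap.IsIdempotentElem.ker_eq_range_one_sub (isIdempotentElem_toLinearMap_iff.2 hP),
    LinearMap.range_eq_bot, sub_eq_zero, eq_comm, ← ContinuousLinearMap.coe_inj]
  rfl

theorem stronglyIrreducible_iff_forall_isIdempotentElem_commute {H : Type*}
    [NormedAddCommGroup H] [InnerProductSpace ℂ H] [CompleteSpace H] (T : H →L[ℂ] H) :
    StronglyIrreducible T ↔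
      ∀ P : H →L[ℂ] H, IsIdempotentElem P → Commute P T → P = 0 ∨ P = 1 := by
  constructor
  · intro hsi P hP hPT
    by_contra! hP01
    have hcompl := ContinuousLinearMap.IsIdempotentElem.isTopCompl hP
    obtain ⟨hrange, hker⟩ := (ContinuousLinearMap.IsIdempotentElem.commute_iff hP).1 hPT
    exact hsi ⟨_, _, hcompl.isClosed, hcompl.isClosed', hrange, hker,
      hcompl.isCompl.inf_eq_bot, hcompl.isCompl.sup_eq_top,
      LinearMap.range_eq_bot.not.2 (ContinuousLinearMap.coe_injective.ne hP01.1),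
      (ContinuousLinearMap.IsIdempotentElem.ker_eq_bot_iff hP).not.2 hP01.2⟩
  · rintro h ⟨M, N, hM, hN, hMT, hNT, hinf, hsup, hM0, hN0⟩
    have hMN : IsCompl M N := ⟨disjoint_iff.2 hinf, codisjoint_iff.2 hsup⟩
    have hcompl : M.IsTopCompl N := Submodule.IsCompl.isTopCompl_of_isClosed hMN hM hN
    have hP := Submodule.isIdempotentElem_projectionL hcompl
    have hPT : Commute (M.projectionL N hcompl) T :=
      (ContinuousLinearMap.IsIdempotentElem.commute_iff hP).2 <| by
        rw [Submodule.range_projectionL, Submodule.ker_projectionL]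
        exact ⟨hMT, hNT⟩
    rcases h _ hP hPT with hP0 | hP1
    · exact hM0 (by rw [← Submodule.range_projectionL hcompl, hP0]; exact LinearMap.range_zero)
    · exact hN0 (by rw [← Submodule.ker_projectionL hcompl, hP1]; exact LinearMap.ker_id)

/-- **The `(n+1)`-Kronecker representation `(∑_{k=0}^n λ_k T^k, T, T², …, T^n)`
(with `λ₀ ≠ 0`) is indecomposable iff `T` is strongly irreducible.**
Indecomposability: the only pairs `(A, B)` of idempotent bounded operators with
`B f_{α_k} = f_{α_k} A` for all `k` are `(0,0)` and `(I,I)`. -/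
theorem stmt_7 {H : Type*} [NormedAddCommGroup H] [InnerProductSpace ℂ H]
    [CompleteSpace H] (T : H →L[ℂ] H) (n : ℕ) (hn : 1 ≤ n)
    (lam : ℕ → ℂ) (hlam : lam 0 ≠ 0) :
    (∀ A B : H →L[ℂ] H, A ∘L A = A → B ∘L B = B →
      (∀ k : ℕ, 1 ≤ k → k ≤ n → B ∘L (T ^ k : H →L[ℂ] H) = (T ^ k : H →L[ℂ] H) ∘L A) →
      B ∘L (∑ k ∈ Finset.range (n + 1), lam k • T ^ k) =
        (∑ k ∈ Finset.range (n + 1), lam k • T ^ k) ∘L A →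
      (A = 0 ∧ B = 0) ∨ (A = 1 ∧ B = 1))
    ↔ StronglyIrreducible T :=
  (forall_intertwining_idempotents_trivial_iff T hn lam hlam).trans
    (stronglyIrreducible_iff_forall_isIdempotentElem_commute T).symm
end

section
/- Let Γ = (V,E,s,r) be an arbitrary finite quiver and let (K,f) be a Hilbert representation of Γ. Then there exist a natural number N, a complex Hilbert space H and closed subspaces E₁,…,E_N of H such that End(K,f) is isomorphic as a complex algebra to { S ∈ B(H) : S(E_i) ⊆ E_i for all i = 1,…,N }. -/
set_option synthInstance.maxHeartbeats 1000000

/-- The endomorphism algebra `End(K,f)` of a Hilbert representation `(K,f)` of a quiver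
with vertex set `V`, arrow set `E` and source/range maps `s r : E → V`:
the subalgebra of `Π v, B(K v)` of families intertwining all arrow operators. -/
noncomputable def repEnd {V E : Type} (s r : E → V) (K : V → Type)
    [∀ v, NormedAddCommGroup (K v)] [∀ v, InnerProductSpace ℂ (K v)]
    (f : ∀ α : E, K (s α) →L[ℂ] K (r α)) :
    Subalgebra ℂ (∀ v, K v →L[ℂ] K v) where
  carrier := {T | ∀ α : E, (T (r α)) ∘L (f α) = (f α) ∘L (T (s α))}
  mul_mem' := by
    intro T T' hT hT' α
    ext x
    have h1 : T' (r α) (f α x) = f α (T' (s α) x) := DFunLike.congr_fun (hT' α) x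
    have h2 : T (r α) (f α (T' (s α) x)) = f α (T (s α) (T' (s α) x)) :=
      DFunLike.congr_fun (hT α) (T' (s α) x)
    simp [ContinuousLinearMap.mul_apply, h1, h2]
  one_mem' := by intro α; ext x; simp
  add_mem' := by
    intro T T' hT hT' α
    ext x
    have h1 : T (r α) (f α x) = f α (T (s α) x) := DFunLike.congr_fun (hT α) x
    have h2 : T' (r α) (f α x) = f α (T' (s α) x) := DFunLike.congr_fun (hT' α) x
    simp [h1, h2]
  zero_mem' := by intro α; ext x; simp
  algebraMap_mem' := by
    intro c α
    ext x
    simp [Algebra.algebraMap_eq_smul_one]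

/-- The endomorphism algebra of a system of subspaces `(H; (E_i)_{i ∈ ι})`:
the subalgebra of `B(H)` of operators leaving every subspace `E i` invariant. -/
noncomputable def invAlg {H : Type} [NormedAddCommGroup H] [InnerProductSpace ℂ H]
    {ι : Type} (Esub : ι → Submodule ℂ H) : Subalgebra ℂ (H →L[ℂ] H) where
  carrier := {S | ∀ i : ι, ∀ x ∈ Esub i, S x ∈ Esub i}
  mul_mem' := by
    intro S S' hS hS' i x hx
    rw [ContinuousLinearMap.mul_apply]
    exact hS i _ (hS' i x hx)
  one_mem' := by intro i x hx; simpa using hx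
  add_mem' := by
    intro S S' hS hS' i x hx
    rw [ContinuousLinearMap.add_apply]
    exact (Esub i).add_mem (hS i x hx) (hS' i x hx)
  zero_mem' := by intro i x hx; simp
  algebraMap_mem' := by
    intro c i x hx
    rw [Algebra.algebraMap_eq_smul_one]
    rw [ContinuousLinearMap.smul_apply, ContinuousLinearMap.one_apply]
    exact (Esub i).smul_mem c hx

/-- A complex Hilbert space together with `N` closed subspaces. -/
structure HilbertSystem (N : ℕ) where
  H : Type
  [grp : NormedAddCommGroup H]
  [ips : InnerProductSpace ℂ H]
  [cpl : CompleteSpace H]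
  Esub : Fin N → Submodule ℂ H
  closed : ∀ i : Fin N, IsClosed ((Esub i : Set H))

attribute [instance] HilbertSystem.grp HilbertSystem.ips HilbertSystem.cpl


/-!
An operator on `X ⊕ X` leaving `0 ⊕ X` and `X ⊕ 0` (the graph of `0`) invariant has the form
`A ⊕ B`, and `A ⊕ B` leaves the graph of `g` invariant iff `B g = g A`. Adding the diagonal (the
graph of `1`) forces `A = B`, so the commutant of finitely many operators `g i` on a Hilbert
space `X` is the endomorphism algebra of the closed subspaces `0 ⊕ X`, `graph 0`, `graph 1` and
`graph (g i)` of `X ⊕ X`.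

`End(K,f)` is such a commutant on `X = ⊕ᵥ Kᵥ`: an operator commuting with the coordinate
projections is block diagonal `(Tᵥ)`, and a block diagonal operator commutes with
`ι_{r α} ∘ f_α ∘ π_{s α}` iff `T_{r α} f_α = f_α T_{s α}`.
-/

noncomputable section

theorem WithLp.prod_ext {p : ENNReal} {α β : Type*} {x y : WithLp p (α × β)}
    (h₁ : x.fst = y.fst) (h₂ : x.snd = y.snd) : x = y :=
  (WithLp.ext_iff p).2 (Prod.ext h₁ h₂)

section InvAlg

variable {H : Type} [NormedAddCommGroup H] [InnerProductSpace ℂ H]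

theorem mem_invAlg_iff {ι : Type} {E : ι → Submodule ℂ H} {S : H →L[ℂ] H} :
    S ∈ invAlg E ↔ ∀ i, Set.MapsTo S (E i) (E i) :=
  Iff.rfl

theorem invAlg_comp_equiv {ι ι' : Type} (E : ι → Submodule ℂ H) (e : ι' ≃ ι) :
    invAlg (E ∘ e) = invAlg E :=
  SetLike.ext fun _ => by
    simp only [mem_invAlg_iff, Function.comp_apply, e.forall_congr_left, Equiv.apply_symm_apply]

end InvAlg

section ProdOp

variable {X : Type} [NormedAddCommGroup X] [NormedSpace ℂ X]

variable (X) in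
def verticalAxis : Submodule ℂ (WithLp 2 (X × X)) :=
  LinearMap.ker (WithLp.fstL 2 ℂ X X : WithLp 2 (X × X) →ₗ[ℂ] X)

def opGraph (g : X →L[ℂ] X) : Submodule ℂ (WithLp 2 (X × X)) :=
  LinearMap.ker
    ((WithLp.sndL 2 ℂ X X - g ∘L WithLp.fstL 2 ℂ X X : WithLp 2 (X × X) →L[ℂ] X) :
      WithLp 2 (X × X) →ₗ[ℂ] X)

theorem mem_verticalAxis {p : WithLp 2 (X × X)} : p ∈ verticalAxis X ↔ p.fst = 0 :=
  Iff.rfl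

theorem mem_opGraph {g : X →L[ℂ] X} {p : WithLp 2 (X × X)} : p ∈ opGraph g ↔ p.snd = g p.fst :=
  sub_eq_zero

theorem isClosed_verticalAxis : IsClosed (verticalAxis X : Set (WithLp 2 (X × X))) :=
  ContinuousLinearMap.isClosed_ker _

theorem isClosed_opGraph (g : X →L[ℂ] X) : IsClosed (opGraph g : Set (WithLp 2 (X × X))) :=
  ContinuousLinearMap.isClosed_ker _

def prodOp (A B : X →L[ℂ] X) : WithLp 2 (X × X) →L[ℂ] WithLp 2 (X × X) :=
  (WithLp.prodContinuousLinearEquiv 2 ℂ X X).symm.toContinuousLinearMap ∘L A.prodMap B ∘L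
    (WithLp.prodContinuousLinearEquiv 2 ℂ X X).toContinuousLinearMap

@[simp]
theorem prodOp_fst (A B : X →L[ℂ] X) (p : WithLp 2 (X × X)) : (prodOp A B p).fst = A p.fst :=
  rfl

@[simp]
theorem prodOp_snd (A B : X →L[ℂ] X) (p : WithLp 2 (X × X)) : (prodOp A B p).snd = B p.snd :=
  rfl

def diagOp : (X →L[ℂ] X) →ₐ[ℂ] (WithLp 2 (X × X) →L[ℂ] WithLp 2 (X × X)) where
  toFun A := prodOp A A
  map_one' := rfl
  map_mul' _ _ := rfl
  map_zero' := rfl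
  map_add' _ _ := rfl
  commutes' _ := rfl

@[simp]
theorem diagOp_apply (A : X →L[ℂ] X) : diagOp A = prodOp A A :=
  rfl

theorem diagOp_injective : Function.Injective (diagOp (X := X)) := by
  intro A B h
  ext x
  simpa using congrArg (fun S => (S (WithLp.toLp 2 (x, 0))).fst) h

theorem exists_eq_prodOp {S : WithLp 2 (X × X) →L[ℂ] WithLp 2 (X × X)}
    (hv : Set.MapsTo S (verticalAxis X : Set _) (verticalAxis X))
    (h0 : Set.MapsTo S (opGraph (0 : X →L[ℂ] X) : Set _) (opGraph (0 : X →L[ℂ] X))) :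
    ∃ A B, S = prodOp A B := by
  let toLpL := (WithLp.prodContinuousLinearEquiv 2 ℂ X X).symm.toContinuousLinearMap
  refine ⟨WithLp.fstL 2 ℂ X X ∘L S ∘L toLpL ∘L ContinuousLinearMap.inl ℂ X X,
    WithLp.sndL 2 ℂ X X ∘L S ∘L toLpL ∘L ContinuousLinearMap.inr ℂ X X, ?_⟩
  ext p : 1
  have hsplit : p = WithLp.toLp 2 (p.fst, 0) + WithLp.toLp 2 (0, p.snd) :=
    WithLp.prod_ext (by simp) (by simp)
  have hsnd : (S (WithLp.toLp 2 (p.fst, 0))).snd = 0 := by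
    simpa using mem_opGraph.1 (h0 (mem_opGraph.2 (by simp)))
  have hfst : (S (WithLp.toLp 2 (0, p.snd))).fst = 0 := hv (mem_verticalAxis.2 rfl)
  conv_lhs => rw [hsplit, map_add]
  exact WithLp.prod_ext (by simp [toLpL, hfst]) (by simp [toLpL, hsnd])

theorem mapsTo_verticalAxis_prodOp (A B : X →L[ℂ] X) :
    Set.MapsTo (prodOp A B) (verticalAxis X : Set _) (verticalAxis X) := by
  intro p hp
  rw [SetLike.mem_coe, mem_verticalAxis] at hp ⊢
  rw [prodOp_fst, hp, map_zero]

theorem mapsTo_opGraph_prodOp_iff {A B g : X →L[ℂ] X} :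
    Set.MapsTo (prodOp A B) (opGraph g : Set _) (opGraph g) ↔ B * g = g * A := by
  constructor
  · intro h
    ext x
    simpa using mem_opGraph.1 (h (mem_opGraph.2 (by simp : (WithLp.toLp 2 (x, g x)).snd = _)))
  · intro h p hp
    rw [SetLike.mem_coe, mem_opGraph] at hp ⊢
    rw [prodOp_fst, prodOp_snd, hp, ← mul_apply_eq_comp, h, mul_apply_eq_comp]

variable {ι : Type} (g : ι → X →L[ℂ] X)

def commutantSystem : Fin 3 ⊕ ι → Submodule ℂ (WithLp 2 (X × X)) :=
  Sum.elim ![verticalAxis X, opGraph 0, opGraph 1] fun i => opGraph (g i)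

theorem isClosed_commutantSystem (j : Fin 3 ⊕ ι) :
    IsClosed (commutantSystem g j : Set (WithLp 2 (X × X))) := by
  rcases j with j | i
  · fin_cases j <;> simp [commutantSystem, isClosed_verticalAxis, isClosed_opGraph]
  · exact isClosed_opGraph _

end ProdOp

section Commutant

variable {X : Type} [NormedAddCommGroup X] [InnerProductSpace ℂ X] {ι : Type}
  (g : ι → X →L[ℂ] X)

theorem mem_invAlg_commutantSystem_iff {S : WithLp 2 (X × X) →L[ℂ] WithLp 2 (X × X)} :
    S ∈ invAlg (commutantSystem g) ↔
      ∃ A ∈ Subalgebra.centralizer ℂ (Set.range g), diagOp A = S := by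
  simp only [mem_invAlg_iff, Sum.forall, Fin.forall_fin_succ, commutantSystem, Sum.elim_inl,
    Sum.elim_inr, Matrix.cons_val_zero, Matrix.cons_val_succ, IsEmpty.forall_iff, and_true]
  constructor
  · rintro ⟨⟨hv, h0, h1⟩, hg⟩
    obtain ⟨A, B, rfl⟩ := exists_eq_prodOp hv h0
    obtain rfl : B = A := by simpa using mapsTo_opGraph_prodOp_iff.1 h1
    refine ⟨B, ?_, rfl⟩
    rintro _ ⟨i, rfl⟩
    exact (mapsTo_opGraph_prodOp_iff.1 (hg i)).symm
  · rintro ⟨A, hA, rfl⟩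
    refine ⟨⟨mapsTo_verticalAxis_prodOp A A, mapsTo_opGraph_prodOp_iff.2 (by simp),
      mapsTo_opGraph_prodOp_iff.2 (by simp)⟩, fun i => mapsTo_opGraph_prodOp_iff.2 ?_⟩
    exact (hA _ ⟨i, rfl⟩).symm

def centralizerEquivInvAlg :
    Subalgebra.centralizer ℂ (Set.range g) ≃ₐ[ℂ] invAlg (commutantSystem g) :=
  (Subalgebra.equivMapOfInjective _ diagOp diagOp_injective).trans <|
    Subalgebra.equivOfEq _ _ <| SetLike.ext fun _ => by
      rw [Subalgebra.mem_map, mem_invAlg_commutantSystem_iff]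

end Commutant

section BlockDiagonal

variable {V E : Type} (K : V → Type) [∀ v, NormedAddCommGroup (K v)] [∀ v, NormedSpace ℂ (K v)]
  (s r : E → V) (f : ∀ α : E, K (s α) →L[ℂ] K (r α))

section

variable [DecidableEq V]

def singleL (v : V) : K v →L[ℂ] PiLp 2 K :=
  (PiLp.continuousLinearEquiv 2 ℂ K).symm.toContinuousLinearMap ∘L ContinuousLinearMap.single ℂ K v

@[simp]
theorem singleL_apply (v : V) (ξ : K v) : singleL K v ξ = PiLp.single 2 v ξ :=
  rfl

def coordProj (v : V) : PiLp 2 K →L[ℂ] PiLp 2 K :=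
  singleL K v ∘L PiLp.proj 2 K v

@[simp]
theorem coordProj_apply (v : V) (x : PiLp 2 K) : coordProj K v x = PiLp.single 2 v (x v) :=
  rfl

def arrowOp (α : E) : PiLp 2 K →L[ℂ] PiLp 2 K :=
  singleL K (r α) ∘L f α ∘L PiLp.proj 2 K (s α)

@[simp]
theorem arrowOp_apply (α : E) (x : PiLp 2 K) :
    arrowOp K s r f α x = PiLp.single 2 (r α) (f α (x (s α))) :=
  rfl

def quiverOps : V ⊕ E → PiLp 2 K →L[ℂ] PiLp 2 K :=
  Sum.elim (coordProj K) (arrowOp K s r f)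

end

variable [Fintype V]

def blockDiag : (∀ v, K v →L[ℂ] K v) →ₐ[ℂ] (PiLp 2 K →L[ℂ] PiLp 2 K) where
  toFun T := (PiLp.continuousLinearEquiv 2 ℂ K).symm.toContinuousLinearMap ∘L
    ContinuousLinearMap.piMap T ∘L (PiLp.continuousLinearEquiv 2 ℂ K).toContinuousLinearMap
  map_one' := rfl
  map_mul' _ _ := rfl
  map_zero' := rfl
  map_add' _ _ := rfl
  commutes' _ := rfl

@[simp]
theorem blockDiag_apply (T : ∀ v, K v →L[ℂ] K v) (x : PiLp 2 K) (v : V) :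
    blockDiag K T x v = T v (x v) :=
  rfl

variable [DecidableEq V]

theorem blockDiag_single (T : ∀ v, K v →L[ℂ] K v) (v : V) (ξ : K v) :
    blockDiag K T (PiLp.single 2 v ξ) = PiLp.single 2 v (T v ξ) := by
  ext w
  rcases eq_or_ne w v with rfl | hw <;> simp [*]

theorem blockDiag_injective : Function.Injective (blockDiag K) := by
  intro T T' h
  ext v ξ
  simpa using congrArg (fun A => A (PiLp.single 2 v ξ) v) h

theorem commute_blockDiag_coordProj (T : ∀ v, K v →L[ℂ] K v) (v : V) :
    Commute (blockDiag K T) (coordProj K v) := by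
  ext x : 1
  simp [mul_apply_eq_comp, blockDiag_single]

theorem exists_blockDiag_of_commute {A : PiLp 2 K →L[ℂ] PiLp 2 K}
    (hA : ∀ v, Commute A (coordProj K v)) : ∃ T, blockDiag K T = A := by
  refine ⟨fun v => PiLp.proj 2 K v ∘L A ∘L singleL K v, ?_⟩
  ext x w
  simpa [mul_apply_eq_comp] using congrArg (fun y : PiLp 2 K => y w) (DFunLike.congr_fun (hA w) x)

theorem commute_blockDiag_arrowOp_iff (T : ∀ v, K v →L[ℂ] K v) (α : E) :
    Commute (blockDiag K T) (arrowOp K s r f α) ↔ T (r α) ∘L f α = f α ∘L T (s α) := by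
  constructor
  · intro h
    ext ξ
    simpa [mul_apply_eq_comp, blockDiag_single] using
      congrArg (fun A => A (PiLp.single 2 (s α) ξ) (r α)) h.eq
  · intro h
    ext x : 1
    simpa [mul_apply_eq_comp, blockDiag_single] using
      congrArg (PiLp.single 2 (r α)) (DFunLike.congr_fun h (x (s α)))

end BlockDiagonal

section Quiver

variable {V E : Type} [Fintype V] [DecidableEq V] (K : V → Type)
  [∀ v, NormedAddCommGroup (K v)] [∀ v, InnerProductSpace ℂ (K v)]
  (s r : E → V) (f : ∀ α : E, K (s α) →L[ℂ] K (r α))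

theorem map_blockDiag_repEnd :
    (repEnd s r K f).map (blockDiag K) =
      Subalgebra.centralizer ℂ (Set.range (quiverOps K s r f)) := by
  ext A
  rw [Subalgebra.mem_map, Subalgebra.mem_centralizer_iff, Set.forall_mem_range, Sum.forall]
  constructor
  · rintro ⟨T, hT, rfl⟩
    exact ⟨fun v => (commute_blockDiag_coordProj K T v).symm.eq,
      fun α => ((commute_blockDiag_arrowOp_iff K s r f T α).2 (hT α)).symm.eq⟩
  · rintro ⟨hv, harrow⟩
    obtain ⟨T, rfl⟩ := exists_blockDiag_of_commute K fun v => (hv v).symm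
    exact ⟨T, fun α => (commute_blockDiag_arrowOp_iff K s r f T α).1 (harrow α).symm, rfl⟩

def repEndEquivCentralizer :
    repEnd s r K f ≃ₐ[ℂ] Subalgebra.centralizer ℂ (Set.range (quiverOps K s r f)) :=
  (Subalgebra.equivMapOfInjective _ _ (blockDiag_injective K)).trans <|
    Subalgebra.equivOfEq _ _ (map_blockDiag_repEnd K s r f)

end Quiver

end

/-- **Every finite quiver's Hilbert representation endomorphism algebra is the
endomorphism algebra of a system of subspaces.**  For any finite quiver `Γ` and any
Hilbert representation `(K,f)` of `Γ`, there exist `N ∈ ℕ`, a complex Hilbert space `H`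
and closed subspaces `E₁, …, E_N` of `H` such that `End(K,f)` is isomorphic, as a complex
algebra, to `{ S ∈ B(H) : S(E_i) ⊆ E_i for all i }`. -/
theorem stmt_18 {V E : Type} [Fintype V] [Fintype E] (s r : E → V)
    (K : V → Type) [∀ v, NormedAddCommGroup (K v)] [∀ v, InnerProductSpace ℂ (K v)]
    [∀ v, CompleteSpace (K v)]
    (f : ∀ α : E, K (s α) →L[ℂ] K (r α)) :
    ∃ (N : ℕ) (𝒮 : HilbertSystem N),
      Nonempty (repEnd s r K f ≃ₐ[ℂ] invAlg 𝒮.Esub) := by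
  classical
  let g := quiverOps K s r f
  let e := Fintype.equivFin (Fin 3 ⊕ (V ⊕ E))
  refine ⟨_, ⟨WithLp 2 (PiLp 2 K × PiLp 2 K), fun i => commutantSystem g (e.symm i),
    fun i => isClosed_commutantSystem g (e.symm i)⟩, ⟨?_⟩⟩
  exact (repEndEquivCentralizer K s r f).trans <| (centralizerEquivInvAlg g).trans <|
    Subalgebra.equivOfEq _ _ (invAlg_comp_equiv _ e.symm).symm
end
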